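/- Let A be a Noetherian ring, let α be an ideal, and let W and Y be closed subsets of Spec(A). Then α¬(W ∪ Y) = (α¬W)¬Y. -/

import Mathlib

open PrimeSpectrum

/-- The multiplicative set `S`: the complement of the union of the associated
primes `p` of `A ⧸ I` such that `V(p) ⊄ W`. -/
def gapMonoid {A : Type*} [CommRing A] (I : Ideal A) (W : Set (PrimeSpectrum A)) :
    Submonoid A where
  carrier := {s : A | ∀ p ∈ associatedPrimes A (A ⧸ I),
      ¬ PrimeSpectrum.zeroLocus (p : Set A) ⊆ W → s ∉ p}
  one_mem' := by
    intro p hp _ h1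
    exact hp.isPrime.ne_top ((Ideal.eq_top_iff_one p).mpr h1)
  mul_mem' := by
    intro a b ha hb p hp hW hab
    rcases hp.isPrime.mem_or_mem hab with h | h
    · exact ha p hp hW h
    · exact hb p hp hW h

/-- The gap ideal `I ¬ W := S⁻¹I ∩ A`. -/
def gapIdeal {A : Type*} [CommRing A] (I : Ideal A) (W : Set (PrimeSpectrum A)) :
    Ideal A :=
  (I.map (algebraMap A (Localization (gapMonoid I W)))).comap
    (algebraMap A (Localization (gapMonoid I W)))

section Aux
variable {A : Type*} [CommRing A]

lemma mem_gapIdeal_iff {I : Ideal A} {W : Set (PrimeSpectrum A)} {a : A} :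
    a ∈ gapIdeal I W ↔ ∃ s ∈ gapMonoid I W, s * a ∈ I := by
  rw [gapIdeal, Ideal.mem_comap, IsLocalization.mem_map_algebraMap_iff (gapMonoid I W)]
  constructor
  · rintro ⟨⟨⟨i, hi⟩, s⟩, h⟩
    rw [← map_mul] at h
    obtain ⟨c, hc⟩ := (IsLocalization.eq_iff_exists (gapMonoid I W) _).mp h
    refine ⟨c * s, mul_mem c.2 s.2, ?_⟩
    have : (c : A) * (a * s) = c * i := hc
    have h2 : (c : A) * s * a = (c : A) * i := by linear_combination this
    rw [h2]
    exact Ideal.mul_mem_left _ _ hi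
  · rintro ⟨s, hs, hsa⟩
    exact ⟨⟨⟨s * a, hsa⟩, ⟨s, hs⟩⟩, by rw [← map_mul, mul_comm]⟩

lemma mem_associatedPrimes_quotient_iff [IsNoetherianRing A] {I p : Ideal A} :
    p ∈ associatedPrimes A (A ⧸ I) ↔ p.IsPrime ∧ ∃ x : A, p = I.colon (Ideal.span {x}) := by
  rw [AssociatedPrimes.mem_iff, isAssociatedPrime_iff]
  refine and_congr_right fun hp => ⟨?_, ?_⟩
  · rintro ⟨x, hx⟩
    obtain ⟨y, rfl⟩ := Ideal.Quotient.mk_surjective x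
    refine ⟨y, hx.trans ?_⟩
    ext r
    rw [Submodule.mem_colon_singleton, Submodule.mem_bot, Ideal.mem_colon_span_singleton]
    rw [show r • (Ideal.Quotient.mk I) y = Ideal.Quotient.mk I (r * y) from rfl,
      Ideal.Quotient.eq_zero_iff_mem]
  · rintro ⟨x, hx⟩
    refine ⟨Ideal.Quotient.mk I x, hx.trans ?_⟩
    ext r
    rw [Submodule.mem_colon_singleton, Submodule.mem_bot, Ideal.mem_colon_span_singleton]
    rw [show r • (Ideal.Quotient.mk I) x = Ideal.Quotient.mk I (r * x) from rfl,
      Ideal.Quotient.eq_zero_iff_mem]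

lemma zeroLocus_subset_closed_iff {W : Set (PrimeSpectrum A)} (hW : IsClosed W)
    {p : Ideal A} (hp : p.IsPrime) :
    zeroLocus (p : Set A) ⊆ W ↔ (⟨p, hp⟩ : PrimeSpectrum A) ∈ W := by
  constructor
  · intro h
    exact h (by simp [mem_zeroLocus])
  · intro h x hx
    obtain ⟨s, rfl⟩ := (isClosed_iff_zeroLocus W).mp hW
    rw [mem_zeroLocus] at h hx ⊢
    exact h.trans hx

lemma gapIdeal_self_le (I : Ideal A) (W : Set (PrimeSpectrum A)) : I ≤ gapIdeal I W :=
  fun a ha => mem_gapIdeal_iff.mpr ⟨1, one_mem _, by rwa [one_mul]⟩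

section Noeth
variable [IsNoetherianRing A]

lemma finite_associatedPrimes (I : Ideal A) : (associatedPrimes A (A ⧸ I)).Finite := by
  classical
  obtain ⟨t, ht, ht'⟩ := Submodule.isLasker A A I
  refine Set.Finite.subset (t.image Ideal.radical).finite_toSet ?_
  intro p hp
  obtain ⟨hprime, x, rfl⟩ := mem_associatedPrimes_quotient_iff.mp hp
  have hinf : t.inf (fun J => J.colon (Ideal.span {x})) ≤ I.colon (Ideal.span {x}) := by
    intro a ha
    rw [Submodule.mem_finsetInf] at ha
    rw [Ideal.mem_colon_span_singleton, ← ht, Submodule.mem_finsetInf]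
    intro J hJ
    have := ha J hJ
    rwa [Ideal.mem_colon_span_singleton] at this
  obtain ⟨J, hJ, hle⟩ := hprime.inf_le'.mp hinf
  have hpJ : I.colon (Ideal.span {x}) ≤ J.colon (Ideal.span {x}) := by
    intro a ha
    rw [Ideal.mem_colon_span_singleton] at ha ⊢
    rw [← ht] at ha
    exact (Submodule.mem_finsetInf.mp ha) J hJ
  have heq : I.colon (Ideal.span {x}) = J.colon (Ideal.span {x}) := le_antisymm hpJ hle
  have hxJ : x ∉ J := by
    intro hx
    apply hprime.ne_top
    rw [Ideal.eq_top_iff_one, heq, Ideal.mem_colon_span_singleton, one_mul]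
    exact hx
  have h1 : I.colon (Ideal.span {x}) ≤ Ideal.radical J := by
    intro a ha
    rw [heq, Ideal.mem_colon_span_singleton] at ha
    rw [mul_comm] at ha
    exact ((Ideal.isPrimary_iff.mp (ht' hJ)).2 ha).resolve_left hxJ
  have h2 : Ideal.radical J ≤ I.colon (Ideal.span {x}) := by
    have : J ≤ J.colon (Ideal.span {x}) := fun a ha => by
      rw [Ideal.mem_colon_span_singleton]; exact Ideal.mul_mem_right _ _ ha
    calc Ideal.radical J ≤ (J.colon (Ideal.span {x})).radical := Ideal.radical_mono this
    _ = (I.colon (Ideal.span {x})).radical := by rw [heq]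
    _ = I.colon (Ideal.span {x}) := hprime.radical
  rw [Finset.coe_image]
  exact ⟨J, hJ, (le_antisymm h1 h2).symm⟩

lemma exists_gapIdeal_eq_colon (I : Ideal A) (W : Set (PrimeSpectrum A)) :
    ∃ s₀ ∈ gapMonoid I W, gapIdeal I W = I.colon (Ideal.span {s₀}) := by
  obtain ⟨J, ⟨s₀, hs₀, rfl⟩, hmax⟩ :=
    set_has_maximal_iff_noetherian.mpr (inferInstance : IsNoetherian A A)
      {J | ∃ s ∈ gapMonoid I W, J = I.colon (Ideal.span {s})}
      ⟨I.colon (Ideal.span {(1 : A)}), 1, one_mem _, rfl⟩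
  refine ⟨s₀, hs₀, ?_⟩
  ext a
  rw [mem_gapIdeal_iff, Ideal.mem_colon_span_singleton]
  constructor
  · rintro ⟨s, hs, hsa⟩
    have hle : I.colon (Ideal.span {s₀}) ≤ I.colon (Ideal.span {s₀ * s}) := by
      intro b hb
      rw [Ideal.mem_colon_span_singleton] at hb ⊢
      rw [show b * (s₀ * s) = b * s₀ * s by ring]
      exact Ideal.mul_mem_right _ _ hb
    have hkey : I.colon (Ideal.span {s₀}) = I.colon (Ideal.span {s₀ * s}) :=
      hle.lt_or_eq.resolve_left (hmax (I.colon (Ideal.span {s₀ * s})) ⟨s₀ * s, mul_mem hs₀ hs, rfl⟩)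
    have : a ∈ I.colon (Ideal.span {s₀ * s}) := by
      rw [Ideal.mem_colon_span_singleton, show a * (s₀ * s) = s * a * s₀ by ring]
      exact Ideal.mul_mem_right _ _ hsa
    rw [← hkey] at this
    rwa [Ideal.mem_colon_span_singleton] at this
  · intro h
    exact ⟨s₀, hs₀, by rwa [mul_comm] at h⟩

lemma associatedPrimes_gapIdeal {I : Ideal A} {W : Set (PrimeSpectrum A)} :
    associatedPrimes A (A ⧸ gapIdeal I W) =
      {p | p ∈ associatedPrimes A (A ⧸ I) ∧ ¬ zeroLocus (p : Set A) ⊆ W} := by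
  classical
  obtain ⟨s₀, hs₀, hcol⟩ := exists_gapIdeal_eq_colon I W
  ext q
  simp only [Set.mem_setOf_eq]
  constructor
  · intro hq
    obtain ⟨hqp, x, hx⟩ := mem_associatedPrimes_quotient_iff.mp hq
    have hq' : q = I.colon (Ideal.span {s₀ * x}) := by
      rw [hx, hcol]
      ext a
      rw [Ideal.mem_colon_span_singleton, Ideal.mem_colon_span_singleton, Ideal.mem_colon_span_singleton,
        show a * x * s₀ = a * (s₀ * x) by ring]
    have hqI : q ∈ associatedPrimes A (A ⧸ I) :=
      mem_associatedPrimes_quotient_iff.mpr ⟨hqp, _, hq'⟩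
    refine ⟨hqI, ?_⟩
    have hdisj : ∀ s ∈ gapMonoid I W, s ∉ q := by
      intro s hs hsq
      rw [hq', Ideal.mem_colon_span_singleton] at hsq
      have hxg : x ∈ gapIdeal I W := mem_gapIdeal_iff.mpr ⟨s * s₀, mul_mem hs hs₀,
        by rwa [show s * s₀ * x = s * (s₀ * x) by ring]⟩
      apply hqp.ne_top
      rw [hx, Ideal.eq_top_iff_one, Ideal.mem_colon_span_singleton, one_mul]
      exact hxg
    intro hsub
    have hbadfin : {p | p ∈ associatedPrimes A (A ⧸ I) ∧ ¬ zeroLocus (p : Set A) ⊆ W}.Finite :=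
      (finite_associatedPrimes I).subset fun p hp => hp.1
    have hcover : (q : Set A) ⊆ ⋃ p ∈ (hbadfin.toFinset : Set (Ideal A)), (id p : Ideal A) := by
      intro a ha
      have hnot : ¬ (∀ p ∈ associatedPrimes A (A ⧸ I),
          ¬ zeroLocus (p : Set A) ⊆ W → a ∉ p) := fun h => hdisj a h ha
      push_neg at hnot
      obtain ⟨p, hp1, hp2, hp3⟩ := hnot
      exact Set.mem_biUnion (Finset.mem_coe.mpr ((Set.Finite.mem_toFinset _).mpr ⟨hp1, hp2⟩)) hp3
    obtain ⟨p, hpmem, hqle⟩ := (Ideal.subset_union_prime ⊥ ⊥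
      (fun p hp _ _ => ((Set.Finite.mem_toFinset _).mp hp).1.isPrime)).mp hcover
    have hpbad := (Set.Finite.mem_toFinset _).mp hpmem
    refine hpbad.2 (Set.Subset.trans ?_ hsub)
    exact zeroLocus_anti_mono hqle
  · rintro ⟨hq, hqW⟩
    obtain ⟨hqp, x, rfl⟩ := mem_associatedPrimes_quotient_iff.mp hq
    refine mem_associatedPrimes_quotient_iff.mpr ⟨hqp, x, ?_⟩
    ext a
    rw [Ideal.mem_colon_span_singleton, Ideal.mem_colon_span_singleton]
    constructor
    · intro h
      exact gapIdeal_self_le I W h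
    · intro h
      obtain ⟨s, hs, hsa⟩ := mem_gapIdeal_iff.mp h
      have hmem : s * a ∈ I.colon (Ideal.span {x}) := by
        rw [Ideal.mem_colon_span_singleton, mul_assoc]
        exact hsa
      have hs' : ∀ p ∈ associatedPrimes A (A ⧸ I), ¬ zeroLocus (p : Set A) ⊆ W → s ∉ p := hs
      rcases hqp.mem_or_mem hmem with h' | h'
      · exact absurd h' (hs' _ hq hqW)
      · rwa [Ideal.mem_colon_span_singleton] at h'

end Noeth

end Aux

/-- Lemma 1.3.v: `α ¬ (W ∪ Y) = (α ¬ W) ¬ Y`. -/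
theorem gapIdeal_union {A : Type*} [CommRing A] [IsNoetherianRing A]
    (α : Ideal A) (W Y : Set (PrimeSpectrum A)) (hW : IsClosed W) (hY : IsClosed Y) :
    gapIdeal α (W ∪ Y) = gapIdeal (gapIdeal α W) Y := by
  have hWY : IsClosed (W ∪ Y) := hW.union hY
  ext a
  rw [mem_gapIdeal_iff, mem_gapIdeal_iff]
  constructor
  · rintro ⟨s, hs, hsa⟩
    have hs' : ∀ p ∈ associatedPrimes A (A ⧸ α), ¬ zeroLocus (p : Set A) ⊆ W ∪ Y → s ∉ p := hs
    refine ⟨s, ?_, gapIdeal_self_le α W hsa⟩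
    show ∀ q ∈ associatedPrimes A (A ⧸ gapIdeal α W), ¬ zeroLocus (q : Set A) ⊆ Y → s ∉ q
    intro q hq hqY
    rw [associatedPrimes_gapIdeal] at hq
    obtain ⟨hqA, hqW⟩ := hq
    refine hs' q hqA ?_
    intro hsub
    have hqprime : q.IsPrime := hqA.isPrime
    rcases (zeroLocus_subset_closed_iff hWY hqprime).mp hsub with h | h
    · exact hqW ((zeroLocus_subset_closed_iff hW hqprime).mpr h)
    · exact hqY ((zeroLocus_subset_closed_iff hY hqprime).mpr h)
  · rintro ⟨t, ht, hta⟩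
    obtain ⟨u, hu, huta⟩ := mem_gapIdeal_iff.mp hta
    have ht' : ∀ p ∈ associatedPrimes A (A ⧸ gapIdeal α W),
        ¬ zeroLocus (p : Set A) ⊆ Y → t ∉ p := ht
    have hu' : ∀ p ∈ associatedPrimes A (A ⧸ α), ¬ zeroLocus (p : Set A) ⊆ W → u ∉ p := hu
    refine ⟨u * t, ?_, by rwa [mul_assoc]⟩
    show ∀ p ∈ associatedPrimes A (A ⧸ α), ¬ zeroLocus (p : Set A) ⊆ W ∪ Y → u * t ∉ p
    intro p hp hpWY
    have hpW : ¬ zeroLocus (p : Set A) ⊆ W := fun h => hpWY (h.trans Set.subset_union_left)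
    have hpY : ¬ zeroLocus (p : Set A) ⊆ Y := fun h => hpWY (h.trans Set.subset_union_right)
    have hpβ : p ∈ associatedPrimes A (A ⧸ gapIdeal α W) := by
      rw [associatedPrimes_gapIdeal]; exact ⟨hp, hpW⟩
    intro hmem
    rcases hp.isPrime.mem_or_mem hmem with h | h
    · exact hu' p hp hpW h
    · exact ht' p hpβ hpY h
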